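/- Assume ∑_{n≥1} a_n < ∞ and let T = ∑_{n≥1} a_n κ_n θ_n (the series converges almost surely). Then for every real t > 0, ℙ( T ≥ t ) = ∑_{n≥1} (1−α) α^{n−1} ℙ( a_n θ_n + ∑_{k>n} a_k κ_k θ_k ≥ t ). -/

import Mathlib

open MeasureTheory ProbabilityTheory Filter Function

/-!
Split `Ω` according to the first index `n` with `κ n = 1`. This event has probability
`(1 - α) α ^ n`, and these probabilities add up to `1`, so almost surely some `κ n` is `1`.
The event only involves `κ 0, …, κ n`; on it the series `T` reduces to
`a n θ n + ∑_{k > n} a k κ k θ k`, which only involves the remaining variables, so the two are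
independent. Summing over `n` gives the identity. All of this needs `T` to converge almost
surely, which holds because `E[∑ a n κ n θ n] ≤ ∑ a n E[θ n] = ∑ a n < ∞`.
-/

open scoped ENNReal

lemma tsum_eq_add_tsum_of_forall_lt_eq_zero {G : Type*} [AddCommGroup G] [TopologicalSpace G]
    [IsTopologicalAddGroup G] [T2Space G] {f : ℕ → G} {n : ℕ} (hf : Summable f)
    (h : ∀ k < n, f k = 0) : ∑' k, f k = f n + ∑' k, f (n + 1 + k) := by
  rw [← hf.sum_add_tsum_nat_add (n + 1), Finset.sum_range_succ,
    Finset.sum_eq_zero fun k hk => h k (Finset.mem_range.1 hk), zero_add]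
  simp_rw [add_comm _ (n + 1)]

lemma measurable_biSup_comap_of_mem {Ω ι β : Type*} [MeasurableSpace β] {F : ι → Ω → β}
    {s : Set ι} {i : ι} (hi : i ∈ s) :
    Measurable[⨆ j ∈ s, MeasurableSpace.comap (F j) inferInstance] (F i) :=
  measurable_iff_comap_le.2
    (le_iSup₂ (f := fun j (_ : j ∈ s) => MeasurableSpace.comap (F j) inferInstance) i hi)

section FirstSuccess

variable {Ω : Type*} (κ : ℕ → Ω → ℝ)

def firstSuccess (n : ℕ) : Set Ω := {ω | κ n ω = 1 ∧ ∀ k < n, κ k ω = 0}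

lemma firstSuccess_eq_biInter (n : ℕ) :
    firstSuccess κ n = ⋂ k ∈ Finset.range (n + 1), κ k ⁻¹' (if k = n then {1} else {0}) := by
  ext ω
  simp only [firstSuccess, Set.mem_ofPred_eq, Set.mem_iInter, Finset.mem_range, Set.mem_preimage]
  constructor
  · rintro ⟨hn, hlt⟩ k hk
    rcases (Nat.lt_succ_iff_lt_or_eq.1 hk) with hk | rfl
    · simp [hk.ne, hlt k hk]
    · simp [hn]
  · intro h
    refine ⟨by simpa using h n n.lt_succ_self, fun k hk => ?_⟩
    simpa [hk.ne] using h k (hk.trans n.lt_succ_self)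

lemma pairwise_disjoint_firstSuccess : Pairwise (Disjoint on firstSuccess κ) := by
  intro m n hmn
  wlog h : m < n generalizing m n
  · exact (this hmn.symm (hmn.symm.lt_of_le (not_lt.1 h))).symm
  refine Set.disjoint_left.2 fun ω hm hn => ?_
  have := hm.1
  rw [hn.2 m h] at this
  exact zero_ne_one this

variable {κ}

lemma measurableSet_firstSuccess {m : MeasurableSpace Ω} {n : ℕ}
    (hκ : ∀ k ≤ n, Measurable[m] (κ k)) : MeasurableSet[m] (firstSuccess κ n) := by
  rw [firstSuccess_eq_biInter]
  refine Finset.measurableSet_biInter _ fun k hk =>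
    hκ k (Nat.lt_succ_iff.1 (Finset.mem_range.1 hk)) ?_
  split_ifs <;> exact measurableSet_singleton _

end FirstSuccess

section Measure

variable {Ω : Type*} [MeasurableSpace Ω] {μ : Measure Ω}

lemma measure_eq_tsum_inter_of_measure_compl_iUnion_eq_zero {C : ℕ → Set Ω}
    {E : Set Ω} (hdisj : Pairwise (Disjoint on C)) (hC : ∀ n, MeasurableSet (C n))
    (hE : MeasurableSet E) (hcover : μ (⋃ n, C n)ᶜ = 0) :
    μ E = ∑' n, μ (C n ∩ E) := by
  rw [← measure_inter_conull hcover, Set.inter_comm, Set.iUnion_inter,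
    measure_iUnion (fun m n hmn => (hdisj hmn).mono Set.inter_subset_left Set.inter_subset_left)
      fun n => (hC n).inter hE]

lemma ae_summable_of_tsum_lintegral_ne_top {X : ℕ → Ω → ℝ}
    (hXm : ∀ k, AEMeasurable (X k) μ) (hX0 : ∀ᵐ ω ∂μ, ∀ k, 0 ≤ X k ω)
    (h : ∑' k, ∫⁻ ω, ENNReal.ofReal (X k ω) ∂μ ≠ ∞) :
    ∀ᵐ ω ∂μ, Summable fun k => X k ω := by
  rw [← lintegral_tsum fun k => (hXm k).ennreal_ofReal] at h
  filter_upwards [ae_lt_top' (AEMeasurable.tsum fun k => (hXm k).ennreal_ofReal) h, hX0]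
    with ω hfin hnn
  exact (ENNReal.summable_toReal hfin.ne).congr fun k => ENNReal.toReal_ofReal (hnn k)

lemma measure_firstSuccess_inter_eq_mul {κ θ : ℕ → Ω → ℝ}
    (hindep : iIndepFun (Sum.elim κ θ) μ) (hκm : ∀ n, Measurable (κ n))
    (hθm : ∀ n, Measurable (θ n)) (n : ℕ) {E : Set Ω}
    (hE : MeasurableSet[⨆ i ∈ (Sum.inl '' Set.Iic n)ᶜ,
      MeasurableSpace.comap (Sum.elim κ θ i) inferInstance] E) :
    μ (firstSuccess κ n ∩ E) = μ (firstSuccess κ n) * μ E := by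
  refine (Indep_iff _ _ _).1
    (indep_biSup_compl (fun i => ?_) hindep.iIndep (Sum.inl '' Set.Iic n)) _ _ ?_ hE
  · rcases i with k | k
    exacts [(hκm k).comap_le, (hθm k).comap_le]
  · exact measurableSet_firstSuccess fun k hk =>
      measurable_biSup_comap_of_mem (F := Sum.elim κ θ) (i := .inl k)
        (Set.mem_image_of_mem _ hk)

end Measure

section Probability

variable {Ω : Type*} [MeasurableSpace Ω] {P : Measure Ω} [IsProbabilityMeasure P]

lemma ae_pos_of_measure_lt_eq_exp {X : Ω → ℝ} (hX : Measurable X)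
    (h : ∀ t, 0 ≤ t → P {ω | t < X ω} = ENNReal.ofReal (Real.exp (-t))) :
    ∀ᵐ ω ∂P, 0 < X ω := by
  rw [ae_iff_measure_eq (measurableSet_lt measurable_const hX).nullMeasurableSet]
  simpa using h 0 le_rfl

lemma lintegral_ofReal_eq_one_of_measure_lt_eq_exp {X : Ω → ℝ} (hX : Measurable X)
    (h : ∀ t, 0 ≤ t → P {ω | t < X ω} = ENNReal.ofReal (Real.exp (-t))) :
    ∫⁻ ω, ENNReal.ofReal (X ω) ∂P = 1 := by
  rw [lintegral_eq_lintegral_meas_lt P ((ae_pos_of_measure_lt_eq_exp hX h).mono fun _ h => h.le)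
      hX.aemeasurable,
    setLIntegral_congr_fun measurableSet_Ioi fun s hs => h s (le_of_lt hs),
    ← ofReal_integral_eq_lintegral_ofReal _ (ae_of_all _ fun s => (Real.exp_pos _).le),
    integral_exp_neg_Ioi_zero, ENNReal.ofReal_one]
  simpa [IntegrableOn] using exp_neg_integrableOn_Ioi (0 : ℝ) one_pos

lemma measure_firstSuccess {κ : ℕ → Ω → ℝ} {α : ℝ} (hindep : iIndepFun κ P)
    (hκm : ∀ n, Measurable (κ n)) (hκ01 : ∀ n ω, κ n ω = 0 ∨ κ n ω = 1) (hα0 : 0 ≤ α)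
    (hκα : ∀ n, P {ω | κ n ω = 0} = ENNReal.ofReal α) (n : ℕ) :
    P (firstSuccess κ n) = ENNReal.ofReal ((1 - α) * α ^ n) := by
  have hone : P (κ n ⁻¹' {1}) = ENNReal.ofReal (1 - α) := by
    have : κ n ⁻¹' {1} = {ω | κ n ω = 0}ᶜ := by
      ext ω
      rcases hκ01 n ω with h | h <;> simp [h]
    rw [this, prob_compl_eq_one_sub (s := {ω | κ n ω = 0}) (hκm n (measurableSet_singleton 0)),
      hκα n, ENNReal.ofReal_sub 1 hα0, ENNReal.ofReal_one]
  have hzero : ∀ k ∈ Finset.range n,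
      P (κ k ⁻¹' if k = n then {1} else {0}) = ENNReal.ofReal α := fun k hk => by
    rw [if_neg (Finset.mem_range.1 hk).ne]
    exact hκα k
  rw [firstSuccess_eq_biInter, hindep.measure_inter_preimage_eq_mul _
      fun k _ => by split_ifs <;> exact measurableSet_singleton _,
    Finset.prod_range_succ, if_pos rfl, hone, Finset.prod_congr rfl hzero, Finset.prod_const,
    Finset.card_range, ENNReal.ofReal_mul' (pow_nonneg hα0 n), ENNReal.ofReal_pow hα0, mul_comm]

lemma measure_compl_iUnion_firstSuccess {κ : ℕ → Ω → ℝ} {α : ℝ} (hindep : iIndepFun κ P)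
    (hκm : ∀ n, Measurable (κ n)) (hκ01 : ∀ n ω, κ n ω = 0 ∨ κ n ω = 1) (hα0 : 0 ≤ α)
    (hα1 : α < 1) (hκα : ∀ n, P {ω | κ n ω = 0} = ENNReal.ofReal α) :
    P (⋃ n, firstSuccess κ n)ᶜ = 0 := by
  have hgeom : Summable fun n => (1 - α) * α ^ n :=
    (summable_geometric_of_lt_one hα0 hα1).mul_left _
  rw [prob_compl_eq_zero_iff (MeasurableSet.iUnion fun n =>
      measurableSet_firstSuccess fun k _ => hκm k),
    measure_iUnion (pairwise_disjoint_firstSuccess κ)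
      fun n => measurableSet_firstSuccess fun k _ => hκm k]
  simp_rw [measure_firstSuccess hindep hκm hκ01 hα0 hκα]
  rw [← ENNReal.ofReal_tsum_of_nonneg (fun n => by have := sub_pos.2 hα1; positivity) hgeom,
    tsum_mul_left, tsum_geometric_of_lt_one hα0 hα1, mul_inv_cancel₀ (sub_ne_zero.2 hα1.ne'),
    ENNReal.ofReal_one]

variable {κ θ : ℕ → Ω → ℝ} {a : ℕ → ℝ}

lemma ae_summable_mul_mul (hκm : ∀ n, Measurable (κ n)) (hθm : ∀ n, Measurable (θ n))
    (hκ01 : ∀ n ω, κ n ω = 0 ∨ κ n ω = 1)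
    (hθexp : ∀ n t, 0 ≤ t → P {ω | t < θ n ω} = ENNReal.ofReal (Real.exp (-t)))
    (ha0 : ∀ n, 0 ≤ a n) (hsum : Summable a) :
    ∀ᵐ ω ∂P, Summable fun n => a n * κ n ω * θ n ω := by
  have hθ0 : ∀ᵐ ω ∂P, ∀ n, 0 ≤ θ n ω :=
    ae_all_iff.2 fun n => (ae_pos_of_measure_lt_eq_exp (hθm n) (hθexp n)).mono fun _ h => h.le
  have hκ0 : ∀ n ω, 0 ≤ κ n ω := fun n ω => by rcases hκ01 n ω with h | h <;> simp [h]
  have hsum_ne_top : ∑' n, ENNReal.ofReal (a n) ≠ ∞ := by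
    rw [← ENNReal.ofReal_tsum_of_nonneg ha0 hsum]
    exact ENNReal.ofReal_ne_top
  refine ae_summable_of_tsum_lintegral_ne_top
    (fun n => (((hκm n).const_mul (a n)).fun_mul (hθm n)).aemeasurable)
    (hθ0.mono fun ω h n => mul_nonneg (mul_nonneg (ha0 n) (hκ0 n ω)) (h n))
    (ne_top_of_le_ne_top hsum_ne_top (ENNReal.tsum_le_tsum fun n => ?_))
  calc ∫⁻ ω, ENNReal.ofReal (a n * κ n ω * θ n ω) ∂P
      ≤ ∫⁻ ω, ENNReal.ofReal (a n) * ENNReal.ofReal (θ n ω) ∂P := lintegral_mono fun ω => by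
        rcases hκ01 n ω with h | h <;> simp [h, ENNReal.ofReal_mul (ha0 n)]
    _ = ENNReal.ofReal (a n) := by
      rw [lintegral_const_mul _ (hθm n).ennreal_ofReal,
        lintegral_ofReal_eq_one_of_measure_lt_eq_exp (hθm n) (hθexp n), mul_one]

lemma measure_firstSuccess_inter_le_tsum (hindep : iIndepFun (Sum.elim κ θ) P)
    (hκm : ∀ n, Measurable (κ n)) (hθm : ∀ n, Measurable (θ n)) {α : ℝ}
    (hκ01 : ∀ n ω, κ n ω = 0 ∨ κ n ω = 1) (hα0 : 0 ≤ α)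
    (hκα : ∀ n, P {ω | κ n ω = 0} = ENNReal.ofReal α)
    (hsummable : ∀ᵐ ω ∂P, Summable fun k => a k * κ k ω * θ k ω) (n : ℕ) (t : ℝ) :
    P (firstSuccess κ n ∩ {ω | t ≤ ∑' k, a k * κ k ω * θ k ω}) =
      ENNReal.ofReal ((1 - α) * α ^ n) *
        P {ω | t ≤ a n * θ n ω + ∑' k, a (n + 1 + k) * κ (n + 1 + k) ω * θ (n + 1 + k) ω} := by
  have hsplit : (firstSuccess κ n ∩ {ω | t ≤ ∑' k, a k * κ k ω * θ k ω} : Set Ω) =ᵐ[P]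
      (firstSuccess κ n ∩ {ω | t ≤ a n * θ n ω +
        ∑' k, a (n + 1 + k) * κ (n + 1 + k) ω * θ (n + 1 + k) ω} : Set Ω) := by
    refine eventuallyEq_set.2 (hsummable.mono fun ω hω => ?_)
    refine and_congr_right fun hC => ?_
    simp only [Set.mem_ofPred_eq]
    rw [tsum_eq_add_tsum_of_forall_lt_eq_zero hω fun k hk => by simp [hC.2 k hk], hC.1, mul_one]
  have hκ : iIndepFun κ P := hindep.precomp (g := Sum.inl) Sum.inl_injective
  rw [measure_congr hsplit, measure_firstSuccess_inter_eq_mul hindep hκm hθm n,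
    measure_firstSuccess hκ hκm hκ01 hα0 hκα]
  let mTail : MeasurableSpace Ω :=
    ⨆ i ∈ (Sum.inl '' Set.Iic n)ᶜ, MeasurableSpace.comap (Sum.elim κ θ i) inferInstance
  have hmeas : ∀ i ∉ Sum.inl '' Set.Iic n, Measurable[mTail] (Sum.elim κ θ i) :=
    fun i hi => measurable_biSup_comap_of_mem hi
  have hθn : Measurable[mTail] (θ n) := hmeas (.inr n) (by simp)
  have hκk : ∀ k, Measurable[mTail] (κ (n + 1 + k)) := fun k => hmeas (.inl _) (by simp; omega)
  have hθk : ∀ k, Measurable[mTail] (θ (n + 1 + k)) := fun k => hmeas (.inr _) (by simp)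
  exact ((hθn.const_mul _).add
    (Measurable.tsum fun k => ((hκk k).const_mul _).fun_mul (hθk k))) measurableSet_Ici

end Probability

theorem stmt13_general (Ω : Type) (_mΩ : MeasurableSpace Ω) (P : Measure Ω)
    [IsProbabilityMeasure P]
    (α : ℝ) (κ θ : ℕ → Ω → ℝ) (a : ℕ → ℝ)
    (hα0 : 0 ≤ α) (hα1 : α < 1)
    (hκm : ∀ n, Measurable (κ n)) (hθm : ∀ n, Measurable (θ n))
    (hindep : iIndepFun (Sum.elim κ θ) P)
    (hκ01 : ∀ n ω, κ n ω = 0 ∨ κ n ω = 1)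
    (hκα : ∀ n, P {ω | κ n ω = 0} = ENNReal.ofReal α)
    (hθexp : ∀ n t, 0 ≤ t → P {ω | t < θ n ω} = ENNReal.ofReal (Real.exp (-t)))
    (ha0 : ∀ n, 0 ≤ a n)
    (hsum : Summable a) :
    (∀ᵐ ω ∂P, Summable fun n => a n * κ n ω * θ n ω) ∧
    ∀ t : ℝ, 0 < t →
      P {ω | t ≤ ∑' n, a n * κ n ω * θ n ω}
        = ∑' n, ENNReal.ofReal ((1 - α) * α ^ n) *
            P {ω | t ≤ a n * θ n ω + ∑' k, a (n + 1 + k) * κ (n + 1 + k) ω * θ (n + 1 + k) ω} := by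
  have hsummable := ae_summable_mul_mul hκm hθm hκ01 hθexp ha0 hsum
  refine ⟨hsummable, fun t _ => ?_⟩
  have hκ : iIndepFun κ P := hindep.precomp (g := Sum.inl) Sum.inl_injective
  rw [measure_eq_tsum_inter_of_measure_compl_iUnion_eq_zero (pairwise_disjoint_firstSuccess κ)
    (fun n => measurableSet_firstSuccess fun k _ => hκm k)
    (measurableSet_le measurable_const
      (Measurable.tsum fun k => ((hκm k).const_mul (a k)).fun_mul (hθm k)))
    (measure_compl_iUnion_firstSuccess hκ hκm hκ01 hα0 hα1 hκα)]
  exact tsum_congr fun n =>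
    measure_firstSuccess_inter_le_tsum hindep hκm hθm hκ01 hα0 hκα hsummable n t

theorem stmt13 (Ω : Type) (_mΩ : MeasurableSpace Ω) (P : Measure Ω)
    [IsProbabilityMeasure P]
    (α : ℝ) (κ θ : ℕ → Ω → ℝ) (a : ℕ → ℝ)
    (hα0 : 0 ≤ α) (hα1 : α < 1)
    (hκm : ∀ n, Measurable (κ n)) (hθm : ∀ n, Measurable (θ n))
    (hindep : iIndepFun (Sum.elim κ θ) P)
    (hκ01 : ∀ n ω, κ n ω = 0 ∨ κ n ω = 1)
    (hκα : ∀ n, P {ω | κ n ω = 0} = ENNReal.ofReal α)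
    (hθexp : ∀ n t, 0 ≤ t → P {ω | t < θ n ω} = ENNReal.ofReal (Real.exp (-t)))
    (ha0 : ∀ n, 0 ≤ a n) (hmono : Antitone a)
    (hsum : Summable a) :
    (∀ᵐ ω ∂P, Summable fun n => a n * κ n ω * θ n ω) ∧
    ∀ t : ℝ, 0 < t →
      P {ω | t ≤ ∑' n, a n * κ n ω * θ n ω}
        = ∑' n, ENNReal.ofReal ((1 - α) * α ^ n) *
            P {ω | t ≤ a n * θ n ω + ∑' k, a (n + 1 + k) * κ (n + 1 + k) ω * θ (n + 1 + k) ω} :=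
  stmt13_general Ω _mΩ P α κ θ a hα0 hα1 hκm hθm hindep hκ01 hκα hθexp ha0 hsum
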